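/- arXiv:2312.14330 — 4 statements merged into one kernel-verified Lean document; each statement's English description precedes it below -/
import Mathlib

section
/- Let 0 < ε ≤ M be real numbers and suppose x₁, x₂, y₁, y₂ are real numbers all lying in the interval [ε, M]. Set d² = (x₁ − x₂)² + (y₁ − y₂)². Then 128·ε⁶·d² ≤ f(x₁, x₂, y₁, y₂) ≤ 200·M⁶·d². -/
noncomputable def f (x₁ x₂ y₁ y₂ : ℝ) : ℝ :=
  ((x₁ - x₂)^2 + (y₁ - y₂)^2) * ((x₁ + x₂)^2 + (y₁ - y₂)^2) *
  ((x₁ - x₂)^2 + (y₁ + y₂)^2) * ((x₁ + x₂)^2 + (y₁ + y₂)^2)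

theorem stmt_0 (ε M x₁ x₂ y₁ y₂ : ℝ) (hε : 0 < ε) (hεM : ε ≤ M)
    (hx₁ : x₁ ∈ Set.Icc ε M) (hx₂ : x₂ ∈ Set.Icc ε M)
    (hy₁ : y₁ ∈ Set.Icc ε M) (hy₂ : y₂ ∈ Set.Icc ε M) :
    128 * ε^6 * ((x₁ - x₂)^2 + (y₁ - y₂)^2) ≤ f x₁ x₂ y₁ y₂ ∧
    f x₁ x₂ y₁ y₂ ≤ 200 * M^6 * ((x₁ - x₂)^2 + (y₁ - y₂)^2) := by
  obtain ⟨hx₁l, hx₁u⟩ := hx₁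
  obtain ⟨hx₂l, hx₂u⟩ := hx₂
  obtain ⟨hy₁l, hy₁u⟩ := hy₁
  obtain ⟨hy₂l, hy₂u⟩ := hy₂
  set A := (x₁ - x₂)^2 + (y₁ - y₂)^2 with hAdef
  set B := (x₁ + x₂)^2 + (y₁ - y₂)^2 with hBdef
  set C := (x₁ - x₂)^2 + (y₁ + y₂)^2 with hCdef
  set D := (x₁ + x₂)^2 + (y₁ + y₂)^2 with hDdef
  have hA : 0 ≤ A := by positivity
  have hBl : 4 * ε^2 ≤ B := by nlinarith [sq_nonneg (y₁ - y₂), sq_nonneg (x₁ + x₂ - 2*ε)]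
  have hCl : 4 * ε^2 ≤ C := by nlinarith [sq_nonneg (x₁ - x₂), sq_nonneg (y₁ + y₂ - 2*ε)]
  have hDl : 8 * ε^2 ≤ D := by
    nlinarith [sq_nonneg (x₁ + x₂ - 2*ε), sq_nonneg (y₁ + y₂ - 2*ε)]
  have hBu : B ≤ 5 * M^2 := by
    nlinarith [mul_nonneg (by linarith : (0:ℝ) ≤ M - y₁ + y₂) (by linarith : (0:ℝ) ≤ M + y₁ - y₂),
      mul_nonneg (by linarith : (0:ℝ) ≤ 2*M - x₁ - x₂) (by linarith : (0:ℝ) ≤ 2*M + x₁ + x₂)]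
  have hCu : C ≤ 5 * M^2 := by
    nlinarith [mul_nonneg (by linarith : (0:ℝ) ≤ M - x₁ + x₂) (by linarith : (0:ℝ) ≤ M + x₁ - x₂),
      mul_nonneg (by linarith : (0:ℝ) ≤ 2*M - y₁ - y₂) (by linarith : (0:ℝ) ≤ 2*M + y₁ + y₂)]
  have hDu : D ≤ 8 * M^2 := by
    nlinarith [mul_nonneg (by linarith : (0:ℝ) ≤ 2*M - x₁ - x₂) (by linarith : (0:ℝ) ≤ 2*M + x₁ + x₂),
      mul_nonneg (by linarith : (0:ℝ) ≤ 2*M - y₁ - y₂) (by linarith : (0:ℝ) ≤ 2*M + y₁ + y₂)]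
  have hε2 : (0:ℝ) ≤ ε^2 := by positivity
  have hBpos : (0:ℝ) ≤ B := by rw [hBdef]; positivity
  have hCpos : (0:ℝ) ≤ C := by rw [hCdef]; positivity
  have hf : f x₁ x₂ y₁ y₂ = A * (B * C * D) := by rw [f]; ring
  constructor
  · have h1 : (4*ε^2) * (4*ε^2) * (8*ε^2) ≤ B * C * D := by
      have := mul_le_mul (mul_le_mul hBl hCl (by positivity) hBpos) hDl (by positivity)
        (mul_nonneg hBpos hCpos)
      linarith
    calc 128 * ε^6 * A = A * ((4*ε^2) * (4*ε^2) * (8*ε^2)) := by ring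
      _ ≤ A * (B * C * D) := mul_le_mul_of_nonneg_left h1 hA
      _ = f x₁ x₂ y₁ y₂ := hf.symm
  · have h1 : B * C * D ≤ (5*M^2) * (5*M^2) * (8*M^2) := by
      have hDpos : (0:ℝ) ≤ D := by rw [hDdef]; positivity
      have := mul_le_mul (mul_le_mul hBu hCu hCpos (by positivity)) hDu hDpos
        (by positivity)
      linarith
    calc f x₁ x₂ y₁ y₂ = A * (B * C * D) := hf
      _ ≤ A * ((5*M^2) * (5*M^2) * (8*M^2)) := mul_le_mul_of_nonneg_left h1 hA
      _ = 200 * M^6 * A := by ring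
end

section
/- For every integer p ≥ 1 the function ρ attains a global maximum on ((ℝ₊)²)^p: there exists z* ∈ ((ℝ₊)²)^p such that ρ(z*) ≥ ρ(z) for all z ∈ ((ℝ₊)²)^p. (Maximal likelihood sets exist.) -/
open Finset in
noncomputable def rho {p : ℕ} (z : Fin p → ℝ × ℝ) : ℝ :=
  Real.exp (-(1/2) * ∑ k, ((z k).1^2 + (z k).2^2)) *
  (∏ k, (z k).1 * (z k).2 * Real.sqrt ((z k).1^2 + (z k).2^2)) *
  ∏ k, ∏ ℓ ∈ univ.filter (fun ℓ => k < ℓ),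
    f (z k).1 (z ℓ).1 (z k).2 (z ℓ).2

open Finset Filter Real

lemma f_nonneg (a b c d : ℝ) : 0 ≤ f a b c d := by unfold f; positivity

lemma continuous_rho {p : ℕ} : Continuous (rho (p := p)) := by
  unfold rho f; fun_prop

/-- the "norm squared" -/
noncomputable def Sz {p : ℕ} (z : Fin p → ℝ × ℝ) : ℝ := ∑ k, ((z k).1^2 + (z k).2^2)

lemma Sz_nonneg {p : ℕ} (z : Fin p → ℝ × ℝ) : 0 ≤ Sz z := by
  unfold Sz; positivity

lemma continuous_Sz {p : ℕ} : Continuous (Sz (p := p)) := by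
  unfold Sz; fun_prop

lemma sq_le_Sz {p : ℕ} (z : Fin p → ℝ × ℝ) (k : Fin p) :
    (z k).1^2 + (z k).2^2 ≤ Sz z := by
  unfold Sz
  exact Finset.single_le_sum (f := fun i => (z i).1^2 + (z i).2^2)
    (fun i _ => by positivity) (mem_univ k)

lemma rho_nonneg {p : ℕ} (z : Fin p → ℝ × ℝ) (hz : ∀ k, 0 ≤ (z k).1 ∧ 0 ≤ (z k).2) :
    0 ≤ rho z := by
  unfold rho
  apply mul_nonneg (mul_nonneg (Real.exp_pos _).le ?_) ?_
  · exact Finset.prod_nonneg fun k _ => by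
      have := (hz k).1; have := (hz k).2; positivity
  · exact Finset.prod_nonneg fun k _ => Finset.prod_nonneg fun l _ => f_nonneg _ _ _ _

lemma rho_eq_zero {p : ℕ} (z : Fin p → ℝ × ℝ) (k : Fin p)
    (h : (z k).1 = 0 ∨ (z k).2 = 0) : rho z = 0 := by
  unfold rho
  have : ∏ j, (z j).1 * (z j).2 * Real.sqrt ((z j).1^2 + (z j).2^2) = 0 := by
    apply Finset.prod_eq_zero (mem_univ k)
    rcases h with h | h <;> rw [h] <;> ring
  rw [this, mul_zero, zero_mul]

lemma rho_le_bound {p : ℕ} (z : Fin p → ℝ × ℝ) (hz : ∀ k, 0 ≤ (z k).1 ∧ 0 ≤ (z k).2) :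
    rho z ≤ Real.exp (-(1/2) * Sz z) * (4 * (1 + Sz z)) ^ (2*p + 4*p*p) := by
  set S := Sz z with hS
  have hS0 : 0 ≤ S := Sz_nonneg z
  have hC1 : (1:ℝ) ≤ 4 * (1 + S) := by nlinarith
  have hC0 : (0:ℝ) ≤ 4 * (1 + S) := by linarith
  -- bound on single factors
  have hA : (∏ k, (z k).1 * (z k).2 * Real.sqrt ((z k).1^2 + (z k).2^2))
      ≤ (4 * (1 + S)) ^ (2*p) := by
    calc (∏ k, (z k).1 * (z k).2 * Real.sqrt ((z k).1^2 + (z k).2^2))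
        ≤ ∏ _k : Fin p, (4*(1+S))^2 := by
          apply Finset.prod_le_prod
          · intro k _; have := (hz k).1; have := (hz k).2; positivity
          · intro k _
            have hx := (hz k).1; have hy := (hz k).2
            have hsk := sq_le_Sz z k
            rw [← hS] at hsk
            have h1 : (z k).1 * (z k).2 ≤ 1 + S := by nlinarith
            have h2 : Real.sqrt ((z k).1^2 + (z k).2^2) ≤ 1 + S := by
              calc Real.sqrt ((z k).1^2 + (z k).2^2) ≤ Real.sqrt (1+S) :=
                    Real.sqrt_le_sqrt (by linarith)
                _ ≤ 1 + S := by
                    have h4 := Real.sq_sqrt (show (0:ℝ) ≤ 1 + S by linarith)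
                    have h5 := Real.sqrt_nonneg (1 + S)
                    nlinarith [sq_nonneg (Real.sqrt (1+S) - 1)]
            have h3 : 0 ≤ Real.sqrt ((z k).1^2 + (z k).2^2) := Real.sqrt_nonneg _
            nlinarith
      _ = ((4*(1+S))^2)^p := by rw [Finset.prod_const, Finset.card_univ, Fintype.card_fin]
      _ = (4*(1+S))^(2*p) := by rw [← pow_mul]
  have hB : (∏ k, ∏ ℓ ∈ univ.filter (fun ℓ => k < ℓ), f (z k).1 (z ℓ).1 (z k).2 (z ℓ).2)
      ≤ (4*(1+S))^(4*p*p) := by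
    calc (∏ k, ∏ ℓ ∈ univ.filter (fun ℓ => k < ℓ), f (z k).1 (z ℓ).1 (z k).2 (z ℓ).2)
        ≤ ∏ _k : Fin p, (4*(1+S))^(4*p) := by
          apply Finset.prod_le_prod
          · intro k _; exact Finset.prod_nonneg fun l _ => f_nonneg _ _ _ _
          · intro k _
            calc (∏ ℓ ∈ univ.filter (fun ℓ => k < ℓ), f (z k).1 (z ℓ).1 (z k).2 (z ℓ).2)
                ≤ ∏ _ℓ ∈ univ.filter (fun ℓ => k < ℓ), (4*(1+S))^4 := by
                  apply Finset.prod_le_prod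
                  · intro l _; exact f_nonneg _ _ _ _
                  · intro l _
                    have hsk := sq_le_Sz z k
                    have hsl := sq_le_Sz z l
                    rw [← hS] at hsk hsl
                    have e1 : ((z k).1 - (z l).1)^2 + ((z k).2 - (z l).2)^2 ≤ 4*(1+S) := by nlinarith [sq_nonneg ((z k).1 + (z l).1), sq_nonneg ((z k).2 + (z l).2)]
                    have e2 : ((z k).1 + (z l).1)^2 + ((z k).2 - (z l).2)^2 ≤ 4*(1+S) := by nlinarith [sq_nonneg ((z k).1 - (z l).1), sq_nonneg ((z k).2 + (z l).2)]
                    have e3 : ((z k).1 - (z l).1)^2 + ((z k).2 + (z l).2)^2 ≤ 4*(1+S) := by nlinarith [sq_nonneg ((z k).1 + (z l).1), sq_nonneg ((z k).2 - (z l).2)]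
                    have e4 : ((z k).1 + (z l).1)^2 + ((z k).2 + (z l).2)^2 ≤ 4*(1+S) := by nlinarith [sq_nonneg ((z k).1 - (z l).1), sq_nonneg ((z k).2 - (z l).2)]
                    have n1 : 0 ≤ ((z k).1 - (z l).1)^2 + ((z k).2 - (z l).2)^2 := by positivity
                    have n2 : 0 ≤ ((z k).1 + (z l).1)^2 + ((z k).2 - (z l).2)^2 := by positivity
                    have n3 : 0 ≤ ((z k).1 - (z l).1)^2 + ((z k).2 + (z l).2)^2 := by positivity
                    have n4 : 0 ≤ ((z k).1 + (z l).1)^2 + ((z k).2 + (z l).2)^2 := by positivity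
                    unfold f
                    calc (((z k).1 - (z l).1)^2 + ((z k).2 - (z l).2)^2) *
                          (((z k).1 + (z l).1)^2 + ((z k).2 - (z l).2)^2) *
                          (((z k).1 - (z l).1)^2 + ((z k).2 + (z l).2)^2) *
                          (((z k).1 + (z l).1)^2 + ((z k).2 + (z l).2)^2)
                        ≤ (4*(1+S)) * (4*(1+S)) * (4*(1+S)) * (4*(1+S)) := by
                          apply mul_le_mul (mul_le_mul (mul_le_mul e1 e2 n2 hC0) e3 n3 (by positivity)) e4 n4 (by positivity)
                      _ = (4*(1+S))^4 := by ring
              _ = ((4*(1+S))^4)^(univ.filter (fun ℓ => k < ℓ)).card := Finset.prod_const _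
              _ ≤ ((4*(1+S))^4)^p := by
                  apply pow_le_pow_right₀ (one_le_pow₀ hC1)
                  calc (univ.filter (fun ℓ => k < ℓ)).card ≤ (univ : Finset (Fin p)).card :=
                      Finset.card_filter_le _ _
                    _ = p := by simp
              _ = (4*(1+S))^(4*p) := by rw [← pow_mul]
      _ = ((4*(1+S))^(4*p))^p := by rw [Finset.prod_const, Finset.card_univ, Fintype.card_fin]
      _ = (4*(1+S))^(4*p*p) := by rw [← pow_mul, mul_assoc]
  have hE : 0 ≤ Real.exp (-(1/2) * S) := (Real.exp_pos _).le
  have hA0 : 0 ≤ ∏ k, (z k).1 * (z k).2 * Real.sqrt ((z k).1^2 + (z k).2^2) :=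
    Finset.prod_nonneg fun k _ => by have := (hz k).1; have := (hz k).2; positivity
  have hB0 : 0 ≤ ∏ k, ∏ ℓ ∈ univ.filter (fun ℓ => k < ℓ), f (z k).1 (z ℓ).1 (z k).2 (z ℓ).2 :=
    Finset.prod_nonneg fun k _ => Finset.prod_nonneg fun l _ => f_nonneg _ _ _ _
  unfold rho
  calc Real.exp (-(1/2) * Sz z) * (∏ k, (z k).1 * (z k).2 * Real.sqrt ((z k).1^2 + (z k).2^2)) *
        ∏ k, ∏ ℓ ∈ univ.filter (fun ℓ => k < ℓ), f (z k).1 (z ℓ).1 (z k).2 (z ℓ).2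
      ≤ Real.exp (-(1/2) * S) * (4*(1+S))^(2*p) * (4*(1+S))^(4*p*p) := by
        apply mul_le_mul (mul_le_mul_of_nonneg_left hA hE) hB hB0 (by positivity)
    _ = Real.exp (-(1/2) * S) * (4*(1+S))^(2*p + 4*p*p) := by rw [pow_add, mul_assoc]

lemma bound_tendsto (N : ℕ) :
    Tendsto (fun S : ℝ => Real.exp (-(1/2) * S) * (4 * (1 + S)) ^ N) atTop (nhds 0) := by
  have hcomp : Tendsto (fun S : ℝ => (1/2 * S) ^ N * Real.exp (-(1/2 * S))) atTop (nhds 0) := by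
    apply (Real.tendsto_pow_mul_exp_neg_atTop_nhds_zero N).comp
    exact (tendsto_id.const_mul_atTop (by norm_num : (0:ℝ) < 1/2))
  have h2 : Tendsto (fun S : ℝ => (12:ℝ)^N * ((1/2 * S) ^ N * Real.exp (-(1/2 * S))))
      atTop (nhds 0) := by
    simpa using hcomp.const_mul ((12:ℝ)^N)
  apply squeeze_zero' ?_ ?_ h2
  · filter_upwards [eventually_ge_atTop (2:ℝ)] with S hS2
    positivity
  · filter_upwards [eventually_ge_atTop (2:ℝ)] with S hS2
    have hb : (4 * (1 + S) : ℝ) ≤ 12 * (1/2 * S) := by linarith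
    have hpow : (4 * (1 + S)) ^ N ≤ (12 * (1/2 * S)) ^ N :=
      pow_le_pow_left₀ (by linarith) hb N
    have he : Real.exp (-(1/2) * S) = Real.exp (-(1/2 * S)) := by ring_nf
    calc Real.exp (-(1/2) * S) * (4 * (1 + S)) ^ N
        ≤ Real.exp (-(1/2) * S) * (12 * (1/2 * S)) ^ N :=
          mul_le_mul_of_nonneg_left hpow (Real.exp_pos _).le
      _ = (12:ℝ)^N * ((1/2 * S) ^ N * Real.exp (-(1/2 * S))) := by rw [he, mul_pow]; ring

theorem stmt_5 (p : ℕ) (hp : 1 ≤ p) :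
    ∃ zstar : Fin p → ℝ × ℝ, (∀ k, 0 < (zstar k).1 ∧ 0 < (zstar k).2) ∧
      ∀ z : Fin p → ℝ × ℝ, (∀ k, 0 < (z k).1 ∧ 0 < (z k).2) →
        rho z ≤ rho zstar := by
  classical
  set N := 2*p + 4*p*p with hN
  set z₀ : Fin p → ℝ × ℝ := fun k => (((k : ℕ) : ℝ) + 1, ((k : ℕ) : ℝ) + 1) with hz₀
  have hz₀pos : ∀ k, 0 < (z₀ k).1 ∧ 0 < (z₀ k).2 := by
    intro k; constructor <;> · simp only [hz₀]; positivity
  have hρ₀ : 0 < rho z₀ := by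
    unfold rho
    apply mul_pos (mul_pos (Real.exp_pos _) ?_) ?_
    · apply Finset.prod_pos
      intro k _
      have h1 := (hz₀pos k).1
      have h2 := (hz₀pos k).2
      positivity
    · apply Finset.prod_pos
      intro k _
      apply Finset.prod_pos
      intro l hl
      have hkl : k < l := by simpa using hl
      have hne : (z₀ k).1 - (z₀ l).1 ≠ 0 := by
        simp only [hz₀]
        have : ((k : ℕ) : ℝ) < ((l : ℕ) : ℝ) := by exact_mod_cast hkl
        intro h; nlinarith
      have h1 : 0 < ((z₀ k).1 - (z₀ l).1)^2 := sq_pos_of_ne_zero hne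
      have hx1 := (hz₀pos k).1
      have hx2 := (hz₀pos l).1
      unfold f
      have f1 : 0 < ((z₀ k).1 - (z₀ l).1)^2 + ((z₀ k).2 - (z₀ l).2)^2 := by positivity
      have f2 : 0 < ((z₀ k).1 + (z₀ l).1)^2 + ((z₀ k).2 - (z₀ l).2)^2 := by positivity
      have f3 : 0 < ((z₀ k).1 - (z₀ l).1)^2 + ((z₀ k).2 + (z₀ l).2)^2 := by positivity
      have f4 : 0 < ((z₀ k).1 + (z₀ l).1)^2 + ((z₀ k).2 + (z₀ l).2)^2 := by positivity
      exact mul_pos (mul_pos (mul_pos f1 f2) f3) f4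
  -- decay at infinity
  obtain ⟨R, hR⟩ : ∃ R, ∀ S ≥ R, Real.exp (-(1/2) * S) * (4 * (1 + S)) ^ N < rho z₀ := by
    have := (bound_tendsto N).eventually (gt_mem_nhds hρ₀)
    exact eventually_atTop.mp this
  set R' := max R (Sz z₀) with hR'
  set K : Set (Fin p → ℝ × ℝ) :=
    {z | (∀ k, 0 ≤ (z k).1 ∧ 0 ≤ (z k).2) ∧ Sz z ≤ R'} with hK
  have hKclosed : IsClosed K := by
    have : K = (⋂ k, {z : Fin p → ℝ × ℝ | 0 ≤ (z k).1} ∩ {z | 0 ≤ (z k).2})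
        ∩ {z | Sz z ≤ R'} := by
      ext z; simp only [hK, Set.mem_setOf_eq, Set.mem_inter_iff, Set.mem_iInter,
        Set.mem_setOf_eq]
    rw [this]
    apply IsClosed.inter
    · apply isClosed_iInter
      intro k
      exact (isClosed_le continuous_const ((continuous_apply k).fst)).inter
        (isClosed_le continuous_const ((continuous_apply k).snd))
    · exact isClosed_le continuous_Sz continuous_const
  have hKbdd : Bornology.IsBounded K := by
    apply (Metric.isBounded_iff_subset_closedBall 0).mpr
    refine ⟨Real.sqrt R', fun z hz => ?_⟩
    rw [Metric.mem_closedBall, dist_zero_right]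
    apply (pi_norm_le_iff_of_nonneg (Real.sqrt_nonneg _)).mpr
    intro k
    have hsz := hz.2
    have hsk : (z k).1^2 + (z k).2^2 ≤ R' := (sq_le_Sz z k).trans hsz
    rw [Prod.norm_def]
    apply max_le
    · rw [Real.norm_eq_abs, ← Real.sqrt_sq_eq_abs]
      exact Real.sqrt_le_sqrt (by nlinarith [sq_nonneg (z k).2])
    · rw [Real.norm_eq_abs, ← Real.sqrt_sq_eq_abs]
      exact Real.sqrt_le_sqrt (by nlinarith [sq_nonneg (z k).1])
  have hKcompact : IsCompact K := Metric.isCompact_of_isClosed_isBounded hKclosed hKbdd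
  have hz₀K : z₀ ∈ K := ⟨fun k => ⟨(hz₀pos k).1.le, (hz₀pos k).2.le⟩, le_max_right _ _⟩
  obtain ⟨zs, hzsK, hmax⟩ := hKcompact.exists_isMaxOn ⟨z₀, hz₀K⟩ continuous_rho.continuousOn
  have hmax' : ∀ z ∈ K, rho z ≤ rho zs := fun z hz => hmax hz
  have hρs : rho z₀ ≤ rho zs := hmax' z₀ hz₀K
  have hzspos : ∀ k, 0 < (zs k).1 ∧ 0 < (zs k).2 := by
    intro k
    obtain ⟨hnn, -⟩ := hzsK
    constructor
    · refine lt_of_le_of_ne (hnn k).1 fun h => ?_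
      have : rho zs = 0 := rho_eq_zero zs k (Or.inl h.symm)
      linarith
    · refine lt_of_le_of_ne (hnn k).2 fun h => ?_
      have : rho zs = 0 := rho_eq_zero zs k (Or.inr h.symm)
      linarith
  refine ⟨zs, hzspos, fun z hz => ?_⟩
  have hznn : ∀ k, 0 ≤ (z k).1 ∧ 0 ≤ (z k).2 := fun k => ⟨(hz k).1.le, (hz k).2.le⟩
  by_cases hcase : Sz z ≤ R'
  · exact hmax' z ⟨hznn, hcase⟩
  · have hRS : R ≤ Sz z := (le_max_left _ _).trans (le_of_not_ge hcase)
    calc rho z ≤ Real.exp (-(1/2) * Sz z) * (4 * (1 + Sz z)) ^ N := rho_le_bound z hznn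
      _ ≤ rho z₀ := (hR _ hRS).le
      _ ≤ rho zs := hρs
end

section
/- Let x₁, x₂, y₁, y₂ be real numbers. Set a = x₁ − x₂, b = x₁ + x₂, let D be the 4×4 diagonal matrix diag(a, −b, b, −a), and let C be the 4×4 symmetric matrix with rows (0, −y₁, y₂, 0), (−y₁, 0, 0, y₂), (y₂, 0, 0, −y₁), (0, y₂, −y₁, 0). Let N be the 16×8 real matrix built from the four vertically stacked 4×8 row-blocks [0 | D], [−D | 0], [0 | C], [−C | 0], where 0 denotes the 4×4 zero matrix. Then det(Nᵀ·N) = f(x₁, x₂, y₁, y₂)². -/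
open Matrix

/-!
Each row block of `N` has a single nonzero column block, and each of `D`, `C` occurs once in
either block column, so `Nᵀ N` is block diagonal with both blocks equal to `G = Dᵀ D + Cᵀ C` and
`det (Nᵀ N) = (det G)²`. Here `G` is supported on its diagonal and antidiagonal, so it splits into
two `2 × 2` blocks `[[p, q], [q, p]]` with `q = -2 y₁ y₂`; their determinants
`p² - q² = (p + q)(p - q)` are the four factors of `f`.
-/

section
variable {m n R : Type*}

lemma fromRows_fromCols_transpose_mul_self [Fintype m] [Ring R] (D C : Matrix m n R) :
    let N := fromRows (fromRows (fromCols 0 D) (fromCols (-D) 0))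
      (fromRows (fromCols 0 C) (fromCols (-C) 0))
    Nᵀ * N = fromBlocks (Dᵀ * D + Cᵀ * C) 0 0 (Dᵀ * D + Cᵀ * C) := by
  simp only [transpose_fromRows, transpose_fromCols, fromCols_mul_fromRows,
    fromRows_mul_fromCols, fromBlocks_add, transpose_zero, transpose_neg,
    Matrix.mul_zero, Matrix.zero_mul, Matrix.neg_mul, Matrix.mul_neg, neg_neg,
    add_zero, zero_add, neg_zero]

lemma det_fromBlocks_self [Fintype n] [DecidableEq n] [CommRing R] (A : Matrix n n R) :
    (fromBlocks A 0 0 A).det = A.det ^ 2 := by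
  rw [det_fromBlocks_zero₂₁, sq]

end

section
variable {R : Type*} [CommRing R]

lemma det_cross_four (p q r s : R) :
    !![p, 0, 0, q; 0, r, s, 0; 0, s, r, 0; q, 0, 0, p].det =
      (p ^ 2 - q ^ 2) * (r ^ 2 - s ^ 2) := by
  rw [det_succ_row_zero]
  simp [Fin.sum_univ_succ, det_fin_three, submatrix_apply, Fin.succAbove]
  ring

lemma transpose_mul_self_add_eq_cross (a b y₁ y₂ : R) :
    let D := diagonal ![a, -b, b, -a]
    let C := !![0, -y₁, y₂, 0; -y₁, 0, 0, y₂; y₂, 0, 0, -y₁; 0, y₂, -y₁, 0]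
    Dᵀ * D + Cᵀ * C =
      !![a ^ 2 + y₁ ^ 2 + y₂ ^ 2, 0, 0, -2 * y₁ * y₂;
         0, b ^ 2 + y₁ ^ 2 + y₂ ^ 2, -2 * y₁ * y₂, 0;
         0, -2 * y₁ * y₂, b ^ 2 + y₁ ^ 2 + y₂ ^ 2, 0;
         -2 * y₁ * y₂, 0, 0, a ^ 2 + y₁ ^ 2 + y₂ ^ 2] := by
  ext i j
  fin_cases i <;> fin_cases j <;> simp [mul_apply, Fin.sum_univ_four, diagonal] <;> ring

end

theorem stmt_9 (x₁ x₂ y₁ y₂ a b : ℝ) (ha : a = x₁ - x₂) (hb : b = x₁ + x₂)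
    (D C : Matrix (Fin 4) (Fin 4) ℝ)
    (hD : D = Matrix.diagonal ![a, -b, b, -a])
    (hC : C = !![0, -y₁, y₂, 0;
                 -y₁, 0, 0, y₂;
                 y₂, 0, 0, -y₁;
                 0, y₂, -y₁, 0])
    (N : Matrix ((Fin 4 ⊕ Fin 4) ⊕ (Fin 4 ⊕ Fin 4)) (Fin 4 ⊕ Fin 4) ℝ)
    (hN : N = Matrix.fromRows
      (Matrix.fromRows (Matrix.fromCols 0 D) (Matrix.fromCols (-D) 0))
      (Matrix.fromRows (Matrix.fromCols 0 C) (Matrix.fromCols (-C) 0))) :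
    (N.transpose * N).det = (f x₁ x₂ y₁ y₂)^2 := by
  subst hN
  rw [fromRows_fromCols_transpose_mul_self, det_fromBlocks_self, hD, hC,
    transpose_mul_self_add_eq_cross, det_cross_four, f, ha, hb]
  ring
end

section
/- Let p ≥ 1 and let X, Y be 2p×2p complex Hermitian matrices with XY + YX = 0, Y invertible, and X having 2p distinct eigenvalues. Then there exist a unitary 2p×2p matrix U and positive real numbers x₁, …, x_p (pairwise distinct) and y₁, …, y_p such that U*·X·U is the block-diagonal matrix with 2×2 diagonal blocks diag(x_j, −x_j) for j = 1, …, p, and U*·Y·U is the block-diagonal matrix with 2×2 diagonal blocks [[0, y_j], [y_j, 0]] for j = 1, …, p. -/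
/-!
Diagonalise `X = V D V*` with `D = diag μ`. In the eigenbasis `Y' = V* Y V` still anticommutes
with `D`, so `(μ i + μ l) Y'_{il} = 0`: `Y'` only connects an eigenvalue with its negative.
As `Y'` is invertible, no row of it vanishes, hence the spectrum is symmetric under negation;
having `2p` distinct elements, it consists of `p` positive values `x j` and their negatives.
Reordering the eigenbasis into pairs `(x j, -x j)` turns `D` into `Amat x` and `Y'` into `2 × 2`
blocks `[[0, z j], [conj (z j), 0]]`, and multiplying the second vector of each pair by the phase
`conj (z j) / ‖z j‖` turns these blocks into `[[0, ‖z j‖], [‖z j‖, 0]]`.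
-/

open Matrix

/-- The 0-based index in `Fin (2*p)` corresponding to the 1-based index `2i - α`. -/
def idx {p : ℕ} (i : Fin p) (α : Fin 2) : Fin (2 * p) :=
  ⟨2 * i.val + 1 - α.val, by have := i.isLt; have := α.isLt; omega⟩

/-- Block-diagonal matrix with 2×2 diagonal blocks `diag (x_j, -x_j)`. -/
noncomputable def Amat {p : ℕ} (x : Fin p → ℝ) : Matrix (Fin (2 * p)) (Fin (2 * p)) ℂ :=
  ∑ j : Fin p, (x j : ℂ) •
    (Matrix.single (idx j 1) (idx j 1) 1 - Matrix.single (idx j 0) (idx j 0) 1)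

/-- Block-diagonal matrix with 2×2 diagonal blocks `[[0, y_j], [y_j, 0]]`. -/
noncomputable def Bmat {p : ℕ} (y : Fin p → ℝ) : Matrix (Fin (2 * p)) (Fin (2 * p)) ℂ :=
  ∑ j : Fin p, (y j : ℂ) •
    (Matrix.single (idx j 1) (idx j 0) 1 + Matrix.single (idx j 0) (idx j 1) 1)

open scoped Finset in
theorem Finset.card_filter_pos_of_forall_neg_mem {α : Type*} [AddCommGroup α] [LinearOrder α]
    [IsOrderedAddMonoid α] {S : Finset α} {n : ℕ} (hS : ∀ t ∈ S, -t ∈ S)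
    (hcard : #S = 2 * n) : #(S.filter (0 < ·)) = n := by
  have hneg : #(S.filter (· < 0)) = #(S.filter (0 < ·)) := by
    refine card_bij' (fun t _ => -t) (fun t _ => -t) ?_ ?_ ?_ ?_ <;> simp_all
  have hsplit := card_filter_add_card_filter_not (s := S) (0 < ·)
  have hle : #(S.filter (fun t => ¬ 0 < t)) ≤ #(S.filter (· < 0)) + 1 := by
    refine (card_le_card ?_).trans (card_insert_le 0 _)
    intro t
    simp only [mem_filter, not_lt, mem_insert]
    exact fun ⟨ht, hle⟩ => hle.eq_or_lt.imp id (⟨ht, ·⟩)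
  have hge : #(S.filter (· < 0)) ≤ #(S.filter (fun t => ¬ 0 < t)) :=
    card_le_card fun t => by simp only [mem_filter, not_lt]; exact fun ⟨ht, h⟩ => ⟨ht, h.le⟩
  omega

namespace Matrix

variable {n R : Type*} [Fintype n] [DecidableEq n]

theorem exists_apply_ne_zero_of_isUnit [CommRing R] [Nontrivial R] {M : Matrix n n R}
    (hM : IsUnit M) (i : n) : ∃ l, M i l ≠ 0 := by
  by_contra! h
  rw [isUnit_iff_isUnit_det, det_eq_zero_of_row_eq_zero i h] at hM
  exact not_isUnit_zero hM

theorem add_mul_apply_eq_zero_of_diagonal_anticomm [CommRing R] {d : n → R}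
    {M : Matrix n n R} (h : diagonal d * M + M * diagonal d = 0) (i l : n) :
    (d i + d l) * M i l = 0 := by
  have := congrFun₂ h i l
  simp only [add_apply, diagonal_mul, mul_diagonal, zero_apply] at this
  linear_combination this

theorem add_eq_zero_of_diagonal_ofReal_anticomm {μ : n → ℝ} {M : Matrix n n ℂ}
    (h : diagonal (fun i => (μ i : ℂ)) * M + M * diagonal (fun i => (μ i : ℂ)) = 0) {i l : n}
    (hil : M i l ≠ 0) : μ i + μ l = 0 := by
  have := (mul_eq_zero.mp (add_mul_apply_eq_zero_of_diagonal_anticomm h i l)).resolve_right hil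
  exact_mod_cast this

variable [CommRing R] [StarRing R]

theorem conjTranspose_mul_mul_submatrix_one_mul_diagonal (π : n → n) (c : n → R)
    (M : Matrix n n R) :
    ((1 : Matrix n n R).submatrix id π * diagonal c)ᴴ * M *
        ((1 : Matrix n n R).submatrix id π * diagonal c) =
      diagonal (star c) * M.submatrix π π * diagonal c := by
  have hperm : (1 : Matrix n n R).submatrix π id * M * (1 : Matrix n n R).submatrix id π =
      M.submatrix π π := by
    conv_rhs => rw [← Matrix.one_mul M, ← Matrix.mul_one (1 * M)]
    rw [submatrix_mul _ _ π id π Function.bijective_id,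
      submatrix_mul _ _ π id id Function.bijective_id, submatrix_id_id]
  rw [← hperm, conjTranspose_mul, conjTranspose_submatrix, conjTranspose_one,
    diagonal_conjTranspose]
  simp only [Matrix.mul_assoc]

theorem conjTranspose_mul_mul_submatrix_one_mul_diagonal_apply (π : n → n) (c : n → R)
    (M : Matrix n n R) (k l : n) :
    (((1 : Matrix n n R).submatrix id π * diagonal c)ᴴ * M *
        ((1 : Matrix n n R).submatrix id π * diagonal c)) k l =
      star (c k) * M (π k) (π l) * c l := by
  rw [conjTranspose_mul_mul_submatrix_one_mul_diagonal, mul_diagonal, diagonal_mul]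
  rfl

theorem conjTranspose_mul_diagonal_mul_submatrix_one_mul_diagonal {π : n → n}
    (hπ : Function.Injective π) {c : n → R} (hc : ∀ k, star (c k) * c k = 1) (d : n → R) :
    ((1 : Matrix n n R).submatrix id π * diagonal c)ᴴ * diagonal d *
        ((1 : Matrix n n R).submatrix id π * diagonal c) = diagonal (d ∘ π) := by
  rw [conjTranspose_mul_mul_submatrix_one_mul_diagonal, submatrix_diagonal _ _ hπ,
    diagonal_mul_diagonal, diagonal_mul_diagonal]
  congr 1
  funext k
  rw [mul_right_comm, Pi.star_apply, hc k, one_mul]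

theorem submatrix_one_mul_diagonal_mem_unitaryGroup {π : n → n}
    (hπ : Function.Injective π) {c : n → R} (hc : ∀ k, star (c k) * c k = 1) :
    (1 : Matrix n n R).submatrix id π * diagonal c ∈ unitaryGroup n R := by
  rw [mem_unitaryGroup_iff', star_eq_conjTranspose]
  simpa using conjTranspose_mul_diagonal_mul_submatrix_one_mul_diagonal hπ hc 1

end Matrix

section Blocks

variable {p : ℕ}

-- `idx j 1 = 2 j` and `idx j 0 = 2 j + 1`: the coordinate `1` marks the first row of block `j`.
def idxEquiv (p : ℕ) : Fin p × Fin 2 ≃ Fin (2 * p) where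
  toFun ja := idx ja.1 ja.2
  invFun k := (⟨k / 2, by omega⟩, ⟨1 - k % 2, by omega⟩)
  left_inv := by
    rintro ⟨j, a⟩
    have := a.isLt
    ext <;> simp only [idx] <;> omega
  right_inv k := by ext; simp only [idx]; omega

theorem idxEquiv_apply (ja : Fin p × Fin 2) : idxEquiv p ja = idx ja.1 ja.2 := rfl

@[simp]
theorem idxEquiv_symm_idx (j : Fin p) (a : Fin 2) :
    (idxEquiv p).symm (idx j a) = (j, a) :=
  (idxEquiv p).symm_apply_apply (j, a)

theorem idx_eq_idx_iff {j j' : Fin p} {a a' : Fin 2} :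
    idx j a = idx j' a' ↔ j = j' ∧ a = a' := by
  have := a.isLt; have := a'.isLt
  simp only [idx, Fin.ext_iff]
  omega

def blockEigenvalues (x : Fin p → ℝ) (ja : Fin p × Fin 2) : ℝ :=
  ![-x ja.1, x ja.1] ja.2

theorem blockEigenvalues_injective {x : Fin p → ℝ} (hx0 : ∀ j, 0 < x j)
    (hx : Function.Injective x) : Function.Injective (blockEigenvalues x) := by
  rintro ⟨j, a⟩ ⟨j', a'⟩ h
  have := hx0 j; have := hx0 j'
  fin_cases a <;> fin_cases a' <;> simp only [blockEigenvalues] at h <;> simp at h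
  all_goals first | linarith | simp [hx (by linarith : x j = x j')]

theorem eq_and_ne_of_blockEigenvalues_add_eq_zero {x : Fin p → ℝ} (hx0 : ∀ j, 0 < x j)
    (hx : Function.Injective x) {ja ja' : Fin p × Fin 2}
    (h : blockEigenvalues x ja + blockEigenvalues x ja' = 0) : ja.1 = ja'.1 ∧ ja.2 ≠ ja'.2 := by
  obtain ⟨j, a⟩ := ja; obtain ⟨j', a'⟩ := ja'
  have := hx0 j; have := hx0 j'
  fin_cases a <;> fin_cases a' <;> simp only [blockEigenvalues] at h <;> simp at h ⊢
  all_goals first | linarith | exact hx (by linarith)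

theorem Amat_eq_diagonal (x : Fin p → ℝ) :
    Amat x = diagonal fun k => (blockEigenvalues x ((idxEquiv p).symm k) : ℂ) := by
  ext k l
  obtain ⟨⟨j, a⟩, rfl⟩ := (idxEquiv p).surjective k
  obtain ⟨⟨j', a'⟩, rfl⟩ := (idxEquiv p).surjective l
  simp only [diagonal_apply, (idxEquiv p).injective.eq_iff, Equiv.symm_apply_apply,
    Prod.ext_iff]
  simp only [Amat, Matrix.sum_apply, Matrix.smul_apply, Matrix.sub_apply, single_apply,
    idxEquiv_apply, idx_eq_idx_iff, blockEigenvalues, smul_eq_mul]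
  rcases eq_or_ne j j' with rfl | hjj <;> fin_cases a <;> fin_cases a' <;> simp [ite_and, *]

theorem Bmat_idx_idx (y : Fin p → ℝ) (j j' : Fin p) (a a' : Fin 2) :
    Bmat y (idx j a) (idx j' a') = if j = j' ∧ a ≠ a' then (y j : ℂ) else 0 := by
  simp only [Bmat, Matrix.sum_apply, Matrix.smul_apply, Matrix.add_apply, single_apply,
    idx_eq_idx_iff, smul_eq_mul]
  rcases eq_or_ne j j' with rfl | hjj <;> fin_cases a <;> fin_cases a' <;> simp [ite_and, *]

theorem eq_Bmat_of_isHermitian {Z : Matrix (Fin (2 * p)) (Fin (2 * p)) ℂ}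
    (hZ : Z.IsHermitian) (y : Fin p → ℝ)
    (hsupp : ∀ j a j' a', Z (idx j a) (idx j' a') ≠ 0 → j = j' ∧ a ≠ a')
    (hy : ∀ j, Z (idx j 1) (idx j 0) = y j) : Z = Bmat y := by
  ext k l
  obtain ⟨⟨j, a⟩, rfl⟩ := (idxEquiv p).surjective k
  obtain ⟨⟨j', a'⟩, rfl⟩ := (idxEquiv p).surjective l
  simp only [idxEquiv_apply, Bmat_idx_idx]
  split_ifs with h
  · obtain ⟨rfl, ha⟩ := h
    fin_cases a <;> fin_cases a' <;> simp at ha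
    · rw [← hZ.apply]
      change star (Z (idx j 1) (idx j 0)) = _
      rw [hy, Complex.star_def, Complex.conj_ofReal]
    · exact hy j
  · exact not_imp_comm.mp (hsupp j a j' a') h

end Blocks

theorem exists_comp_eq_blockEigenvalues {ι : Type*} [Fintype ι] {p : ℕ} {μ : ι → ℝ}
    (hcard : Fintype.card ι = 2 * p) (hμ : Function.Injective μ)
    (hsymm : ∀ i, ∃ l, μ l = -μ i) :
    ∃ x : Fin p → ℝ, (∀ j, 0 < x j) ∧ Function.Injective x ∧
      ∃ π : Fin p × Fin 2 → ι, ∀ ja, μ (π ja) = blockEigenvalues x ja := by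
  set S := Finset.univ.image μ
  have hS : ∀ t ∈ S, -t ∈ S := by
    simp only [S, Finset.mem_image, Finset.mem_univ, true_and, forall_exists_index,
      forall_apply_eq_imp_iff]
    exact hsymm
  have hpos := Finset.card_filter_pos_of_forall_neg_mem hS
    (by rw [Finset.card_image_of_injective _ hμ, Finset.card_univ, hcard])
  set x := (S.filter (0 < ·)).orderEmbOfFin hpos
  have hx : ∀ j, x j ∈ S ∧ 0 < x j := fun j =>
    Finset.mem_filter.mp (Finset.orderEmbOfFin_mem _ _ j)
  refine ⟨x, fun j => (hx j).2, x.injective, ?_⟩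
  have hpre : ∀ ja, ∃ i, μ i = blockEigenvalues x ja := by
    rintro ⟨j, a⟩
    have hmem : blockEigenvalues x (j, a) ∈ S := by
      fin_cases a
      exacts [hS _ (hx j).1, (hx j).1]
    simpa [S] using hmem
  choose π hπ using hpre
  exact ⟨π, hπ⟩

theorem exists_blockEigenvalues_of_diagonal_ofReal_anticomm {ι : Type*} [Fintype ι]
    [DecidableEq ι] {p : ℕ} (hcard : Fintype.card ι = 2 * p) {μ : ι → ℝ}
    (hμ : Function.Injective μ) {Y : Matrix ι ι ℂ} (hYu : IsUnit Y)
    (hanti : diagonal (fun i => (μ i : ℂ)) * Y + Y * diagonal (fun i => (μ i : ℂ)) = 0) :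
    ∃ x : Fin p → ℝ, (∀ j, 0 < x j) ∧ Function.Injective x ∧
      ∃ π : Fin p × Fin 2 → ι, (∀ ja, μ (π ja) = blockEigenvalues x ja) ∧
        ∀ j, Y (π (j, 1)) (π (j, 0)) ≠ 0 := by
  have hsymm : ∀ i, ∃ l, μ l = -μ i := fun i => by
    obtain ⟨l, hl⟩ := exists_apply_ne_zero_of_isUnit hYu i
    exact ⟨l, by linarith [add_eq_zero_of_diagonal_ofReal_anticomm hanti hl]⟩
  obtain ⟨x, hx0, hx, π, hπ⟩ := exists_comp_eq_blockEigenvalues hcard hμ hsymm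
  refine ⟨x, hx0, hx, π, hπ, fun j => ?_⟩
  obtain ⟨l, hl⟩ := exists_apply_ne_zero_of_isUnit hYu (π (j, 1))
  have hμl : μ l = μ (π (j, 0)) := by
    have := add_eq_zero_of_diagonal_ofReal_anticomm hanti hl
    simp only [hπ, blockEigenvalues] at this ⊢
    simp at this ⊢
    linarith
  rwa [hμ hμl] at hl

theorem exists_unitary_conj_eq_Amat_and_eq_Bmat {p : ℕ} {μ : Fin (2 * p) → ℝ}
    (hμ : Function.Injective μ) {Y : Matrix (Fin (2 * p)) (Fin (2 * p)) ℂ} (hY : Y.IsHermitian)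
    (hYu : IsUnit Y)
    (hanti : diagonal (fun i => (μ i : ℂ)) * Y + Y * diagonal (fun i => (μ i : ℂ)) = 0) :
    ∃ W ∈ unitaryGroup (Fin (2 * p)) ℂ, ∃ x y : Fin p → ℝ,
      (∀ j, 0 < x j) ∧ Function.Injective x ∧ (∀ j, 0 < y j) ∧
      star W * diagonal (fun i => (μ i : ℂ)) * W = Amat x ∧ star W * Y * W = Bmat y := by
  obtain ⟨x, hx0, hx, π, hπ, hz⟩ :=
    exists_blockEigenvalues_of_diagonal_ofReal_anticomm (Fintype.card_fin _) hμ hYu hanti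
  set z : Fin p → ℂ := fun j => Y (π (j, 1)) (π (j, 0))
  replace hz : ∀ j, z j ≠ 0 := hz
  have hπinj : Function.Injective π := fun ja ja' h =>
    blockEigenvalues_injective hx0 hx (by rw [← hπ, ← hπ, h])
  set τ := π ∘ (idxEquiv p).symm
  have hτ : Function.Injective τ := hπinj.comp (idxEquiv p).symm.injective
  set c : Fin (2 * p) → ℂ :=
    (fun ja => ![star (z ja.1) / ‖z ja.1‖, 1] ja.2) ∘ (idxEquiv p).symm
  have hc : ∀ k, star (c k) * c k = 1 := by
    intro k
    obtain ⟨⟨j, a⟩, rfl⟩ := (idxEquiv p).surjective k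
    fin_cases a
    · rw [Complex.star_def, Complex.conj_mul']
      simp [c, hz]
    · simp [c]
  refine ⟨(1 : Matrix _ _ ℂ).submatrix id τ * diagonal c,
    submatrix_one_mul_diagonal_mem_unitaryGroup hτ hc,
    x, fun j => ‖z j‖, hx0, hx, fun j => norm_pos_iff.mpr (hz j), ?_, ?_⟩
  · rw [star_eq_conjTranspose, conjTranspose_mul_diagonal_mul_submatrix_one_mul_diagonal hτ hc,
      Amat_eq_diagonal]
    simp [τ, hπ]
  · refine eq_Bmat_of_isHermitian (isHermitian_conjTranspose_mul_mul _ hY) _ ?_ ?_ <;>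
      simp only [conjTranspose_mul_mul_submatrix_one_mul_diagonal_apply]
    · intro j a j' a' h
      have := add_eq_zero_of_diagonal_ofReal_anticomm hanti
        (right_ne_zero_of_mul (left_ne_zero_of_mul h))
      simp only [τ, Function.comp_apply, idxEquiv_symm_idx, hπ] at this
      exact eq_and_ne_of_blockEigenvalues_add_eq_zero hx0 hx this
    · intro j
      have hnorm : (‖z j‖ : ℂ) ≠ 0 :=
        Complex.ofReal_ne_zero.mpr (norm_ne_zero_iff.mpr (hz j))
      simp only [τ, c, Function.comp_apply, idxEquiv_symm_idx, Matrix.cons_val_one,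
        Matrix.cons_val_zero, star_one, one_mul]
      rw [← mul_div_assoc, Complex.star_def, Complex.mul_conj', sq,
        mul_div_cancel_right₀ _ hnorm]

theorem stmt_15_general (p : ℕ) (X Y : Matrix (Fin (2 * p)) (Fin (2 * p)) ℂ)
    (hX : X.IsHermitian) (hY : Y.IsHermitian)
    (hanti : X * Y + Y * X = 0) (hYinv : IsUnit Y)
    (hdistinct : Function.Injective hX.eigenvalues) :
    ∃ U ∈ Matrix.unitaryGroup (Fin (2 * p)) ℂ, ∃ x y : Fin p → ℝ,
      (∀ j, 0 < x j) ∧ Function.Injective x ∧ (∀ j, 0 < y j) ∧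
      star U * X * U = Amat x ∧ star U * Y * U = Bmat y := by
  set f := Unitary.conjStarAlgAut ℂ _ (star hX.eigenvectorUnitary)
  have hfX : f X = diagonal fun i => (hX.eigenvalues i : ℂ) :=
    hX.conjStarAlgAut_star_eigenvectorUnitary
  have hanti' : f X * f Y + f Y * f X = 0 := by
    rw [← map_mul, ← map_mul, ← map_add, hanti, map_zero]
  obtain ⟨W, hW, x, y, hx0, hx, hy0, hWX, hWY⟩ :=
    exists_unitary_conj_eq_Amat_and_eq_Bmat hdistinct (hY.isSelfAdjoint.map f) (hYinv.map f)
      (hfX ▸ hanti')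
  refine ⟨hX.eigenvectorUnitary * W, mul_mem hX.eigenvectorUnitary.2 hW, x, y, hx0, hx, hy0,
    ?_, ?_⟩
  · rw [← hWX, ← hfX]
    simp [f, Matrix.mul_assoc]
  · rw [← hWY]
    simp [f, Matrix.mul_assoc]

theorem stmt_15 (p : ℕ) (hp : 1 ≤ p) (X Y : Matrix (Fin (2 * p)) (Fin (2 * p)) ℂ)
    (hX : X.IsHermitian) (hY : Y.IsHermitian)
    (hanti : X * Y + Y * X = 0) (hYinv : IsUnit Y)
    (hdistinct : Function.Injective hX.eigenvalues) :
    ∃ U ∈ Matrix.unitaryGroup (Fin (2 * p)) ℂ, ∃ x y : Fin p → ℝ,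
      (∀ j, 0 < x j) ∧ Function.Injective x ∧ (∀ j, 0 < y j) ∧
      star U * X * U = Amat x ∧ star U * Y * U = Bmat y :=
  stmt_15_general p X Y hX hY hanti hYinv hdistinct
end
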